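/- arXiv:2103.10041 — 6 statements merged into one kernel-verified Lean document; each statement's English description precedes it below -/
import Mathlib

section
/- Let n ≥ 8. With v₁ = {1,2,3}, v₂ = {4,5,6}, v₃ = {1,7,8} (so v₁ and v₃ share exactly the label 1, and both are disjoint from v₂), the number of 3-subsets of {1,…,n} that intersect each of v₁, v₂, v₃ is at most 3n + 3. -/
/-!
Induct on `n` from the 27 triples for `n = 8`. A new triple for `n + 1` contains `n + 1 ≥ 9`,
which lies in none of the three path vertices, so its two other labels must meet all three of them;
this forces one of them to be the shared label `1` and the other to lie in `{4,5,6}`, giving at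
most three new triples per step.
-/

open Finset

def hittingTriples (n : ℕ) : Finset (Finset ℕ) :=
  ((Icc 1 n).powersetCard 3).filter
    (fun w => (w ∩ ({1,2,3} : Finset ℕ)).Nonempty ∧
              (w ∩ ({4,5,6} : Finset ℕ)).Nonempty ∧
              (w ∩ ({1,7,8} : Finset ℕ)).Nonempty)

lemma card_hittingTriples_eight : (hittingTriples 8).card = 27 := by decide

lemma exists_eq_of_hitting_of_mem {w : Finset ℕ} {m : ℕ} (hw : w.card = 3) (hm : 8 < m)
    (hmw : m ∈ w) (h₁ : (w ∩ {1,2,3}).Nonempty) (h₂ : (w ∩ {4,5,6}).Nonempty)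
    (h₃ : (w ∩ {1,7,8}).Nonempty) : ∃ a ∈ ({4,5,6} : Finset ℕ), w = {1, a, m} := by
  obtain ⟨b, hbw, hb⟩ : ∃ b ∈ w, b = 1 ∨ b = 2 ∨ b = 3 := by simpa [Finset.Nonempty] using h₁
  obtain ⟨a, haw, ha⟩ : ∃ a ∈ w, a = 4 ∨ a = 5 ∨ a = 6 := by simpa [Finset.Nonempty] using h₂
  obtain ⟨c, hcw, hc⟩ : ∃ c ∈ w, c = 1 ∨ c = 7 ∨ c = 8 := by simpa [Finset.Nonempty] using h₃
  -- `b, a, c, m` lie in `w`, and only `b = c` can coincide, so a triple forces `b = c = 1`.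
  have hbc : b = c := by
    by_contra hne
    have hsub : ({b, c, a, m} : Finset ℕ) ⊆ w := by
      simp only [insert_subset_iff, singleton_subset_iff]; exact ⟨hbw, hcw, haw, hmw⟩
    have hcard : ({b, c, a, m} : Finset ℕ).card = 4 := by
      rw [card_insert_of_notMem, card_insert_of_notMem, card_pair] <;> simp <;> omega
    have := card_le_card hsub
    omega
  have hb1 : b = 1 := by omega
  subst hbc hb1
  refine ⟨a, by simpa using ha, (eq_of_subset_of_card_le ?_ ?_).symm⟩
  · simp only [insert_subset_iff, singleton_subset_iff]; exact ⟨hbw, haw, hmw⟩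
  · rw [hw, card_insert_of_notMem, card_pair] <;> simp <;> omega

lemma hittingTriples_succ_subset {n : ℕ} (hn : 8 ≤ n) :
    hittingTriples (n + 1) ⊆
      hittingTriples n ∪ ({4,5,6} : Finset ℕ).image (fun a => {1, a, n + 1}) := by
  intro w hw
  simp only [hittingTriples, mem_filter, mem_powersetCard] at hw
  obtain ⟨⟨hsub, hcard⟩, h₁, h₂, h₃⟩ := hw
  by_cases hmem : n + 1 ∈ w
  · obtain ⟨a, ha, rfl⟩ := exists_eq_of_hitting_of_mem hcard (by omega) hmem h₁ h₂ h₃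
    exact mem_union_right _ (mem_image_of_mem _ ha)
  · have hsub' : w ⊆ Icc 1 n := fun x hx => by
      have := mem_Icc.1 (hsub hx)
      have : x ≠ n + 1 := fun h => hmem (h ▸ hx)
      exact mem_Icc.2 (by omega)
    exact mem_union_left _ (by simp [hittingTriples, hsub', hcard, h₁, h₂, h₃])

lemma card_hittingTriples_succ_le {n : ℕ} (hn : 8 ≤ n) :
    (hittingTriples (n + 1)).card ≤ (hittingTriples n).card + 3 :=
  calc (hittingTriples (n + 1)).card
      ≤ (hittingTriples n ∪ ({4,5,6} : Finset ℕ).image (fun a => {1, a, n + 1})).card :=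
        card_le_card (hittingTriples_succ_subset hn)
    _ ≤ (hittingTriples n).card + (({4,5,6} : Finset ℕ).image (fun a => {1, a, n + 1})).card :=
        card_union_le _ _
    _ ≤ (hittingTriples n).card + 3 := Nat.add_le_add_left (card_image_le.trans (by decide)) _

lemma card_hittingTriples_le {n : ℕ} (hn : 8 ≤ n) : (hittingTriples n).card ≤ 3 * n + 3 := by
  induction n, hn using Nat.le_induction with
  | base => rw [card_hittingTriples_eight]
  | succ k hk ih => have := card_hittingTriples_succ_le hk; omega

/-- For `n ≥ 8`, the number of 3-subsets of `{1,…,n}` intersecting each of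
`{1,2,3}`, `{4,5,6}`, `{1,7,8}` (a Type 1 path) is at most `3n + 3`. -/
theorem stmt_1 (n : ℕ) (hn : 8 ≤ n) :
    ((((Finset.Icc 1 n)).powersetCard 3).filter
      (fun w => (w ∩ ({1,2,3} : Finset ℕ)).Nonempty ∧
                (w ∩ ({4,5,6} : Finset ℕ)).Nonempty ∧
                (w ∩ ({1,7,8} : Finset ℕ)).Nonempty)).card ≤ 3 * n + 3 :=
  card_hittingTriples_le hn
end

section
/- Let n ≥ 7. With v₁ = {1,2,3}, v₂ = {4,5,6}, v₃ = {1,2,7} (so v₁ and v₃ share exactly the two labels 1 and 2, and both are disjoint from v₂), the number of 3-subsets of {1,…,n} that intersect each of v₁, v₂, v₃ is at most 6n − 18. -/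
/-!
A 3-set `w` meeting `{1,2,3}`, `{4,5,6}` and `{1,2,7}` that contains a label `x ≥ 8` has only two
other elements with which to meet three sets; since `{4,5,6}` is disjoint from the other two, one of
them lies in `{4,5,6}` and the other in `{1,2,3} ∩ {1,2,7} = {1,2}`. So each new label adds at most
`2 · 3 = 6` such sets, and induction from the count `24` for `n = 7` gives `6n − 18`.
-/

open Finset

variable {α : Type*} [DecidableEq α]

def tripleTransversals (A B C s : Finset α) : Finset (Finset α) :=
  (s.powersetCard 3).filter fun w => (w ∩ A).Nonempty ∧ (w ∩ B).Nonempty ∧ (w ∩ C).Nonempty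

lemma exists_eq_triple_of_inter_nonempty {A B C w : Finset α} {x : α}
    (hAB : Disjoint A B) (hCB : Disjoint C B) (hw : #w = 3) (hx : x ∈ w)
    (hxA : x ∉ A) (hxB : x ∉ B) (hxC : x ∉ C)
    (hwA : (w ∩ A).Nonempty) (hwB : (w ∩ B).Nonempty) (hwC : (w ∩ C).Nonempty) :
    ∃ a ∈ A ∩ C, ∃ b ∈ B, w = {a, b, x} := by
  obtain ⟨a, ha⟩ := hwA
  obtain ⟨b, hb⟩ := hwB
  obtain ⟨c, hc⟩ := hwC
  rw [mem_inter] at ha hb hc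
  have hab : a ≠ b := fun h => disjoint_left.1 hAB ha.2 (h ▸ hb.2)
  have hcb : c ≠ b := fun h => disjoint_left.1 hCB hc.2 (h ▸ hb.2)
  have hax : a ≠ x := fun h => hxA (h ▸ ha.2)
  have hbx : b ≠ x := fun h => hxB (h ▸ hb.2)
  have hcx : c ≠ x := fun h => hxC (h ▸ hc.2)
  -- otherwise `a, b, c, x` would be four distinct elements of `w`
  have hac : a = c := by
    by_contra hac
    have hsub : ({a, b, c, x} : Finset α) ⊆ w := by
      simp [insert_subset_iff, ha.1, hb.1, hc.1, hx]
    have := card_le_card hsub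
    rw [card_insert_of_notMem (by simp [*]), card_insert_of_notMem (by simp [*, hcb.symm]),
      card_pair hcx] at this
    omega
  subst hac
  refine ⟨a, mem_inter.2 ⟨ha.2, hc.2⟩, b, hb.2, (eq_of_subset_of_card_le ?_ ?_).symm⟩
  · simp [insert_subset_iff, ha.1, hb.1, hx]
  · rw [hw, card_insert_of_notMem (by simp [*]), card_pair hbx]

lemma tripleTransversals_insert_subset {A B C : Finset α} (s : Finset α) {x : α}
    (hAB : Disjoint A B) (hCB : Disjoint C B) (hxA : x ∉ A) (hxB : x ∉ B) (hxC : x ∉ C) :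
    tripleTransversals A B C (insert x s) ⊆
      tripleTransversals A B C s ∪ ((A ∩ C) ×ˢ B).image fun p => {p.1, p.2, x} := by
  intro w hw
  simp only [tripleTransversals, mem_filter, mem_powersetCard, subset_insert_iff] at hw
  obtain ⟨⟨hws, hw3⟩, hwA, hwB, hwC⟩ := hw
  by_cases hx : x ∈ w
  · obtain ⟨a, ha, b, hb, rfl⟩ :=
      exists_eq_triple_of_inter_nonempty hAB hCB hw3 hx hxA hxB hxC hwA hwB hwC
    exact mem_union_right _ (mem_image.2 ⟨(a, b), mem_product.2 ⟨ha, hb⟩, rfl⟩)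
  · rw [erase_eq_of_notMem hx] at hws
    exact mem_union_left _ (mem_filter.2 ⟨mem_powersetCard.2 ⟨hws, hw3⟩, hwA, hwB, hwC⟩)

lemma card_tripleTransversals_insert_le {A B C : Finset α} (s : Finset α) {x : α}
    (hAB : Disjoint A B) (hCB : Disjoint C B) (hxA : x ∉ A) (hxB : x ∉ B) (hxC : x ∉ C) :
    #(tripleTransversals A B C (insert x s)) ≤
      #(tripleTransversals A B C s) + #(A ∩ C) * #B :=
  calc #(tripleTransversals A B C (insert x s))
      ≤ #(tripleTransversals A B C s ∪ ((A ∩ C) ×ˢ B).image fun p => {p.1, p.2, x}) :=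
        card_le_card (tripleTransversals_insert_subset s hAB hCB hxA hxB hxC)
    _ ≤ #(tripleTransversals A B C s) + #((A ∩ C) ×ˢ B) :=
        (card_union_le _ _).trans (Nat.add_le_add_left card_image_le _)
    _ = #(tripleTransversals A B C s) + #(A ∩ C) * #B := by rw [card_product]

/-- For `n ≥ 7`, the number of 3-subsets of `{1,…,n}` intersecting each of
`{1,2,3}`, `{4,5,6}`, `{1,2,7}` (a Type 2 path) is at most `6n − 18`. -/
theorem stmt_2 (n : ℕ) (hn : 7 ≤ n) :
    ((((Finset.Icc 1 n)).powersetCard 3).filter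
      (fun w => (w ∩ ({1,2,3} : Finset ℕ)).Nonempty ∧
                (w ∩ ({4,5,6} : Finset ℕ)).Nonempty ∧
                (w ∩ ({1,2,7} : Finset ℕ)).Nonempty)).card ≤ 6 * n - 18 := by
  change #(tripleTransversals {1, 2, 3} {4, 5, 6} {1, 2, 7} (Icc 1 n)) ≤ 6 * n - 18
  induction n, hn using Nat.le_induction with
  | base => decide
  | succ n hn ih =>
    rw [← insert_Icc_right_eq_Icc_add_one (by omega)]
    have hstep := card_tripleTransversals_insert_le (Icc 1 n) (x := n + 1)
      (A := {1, 2, 3}) (B := {4, 5, 6}) (C := {1, 2, 7})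
      (by decide) (by decide) (by simp; omega) (by simp; omega) (by simp; omega)
    have hnew : #(({1, 2, 3} : Finset ℕ) ∩ {1, 2, 7}) * #({4, 5, 6} : Finset ℕ) = 6 := by decide
    omega
end

section
/- In KG(9,3), restrict to the 27 vertices {a,b,c} with a ∈ {1,2,3}, b ∈ {4,5,6}, c ∈ {7,8,9}. Any subset T of these 27 vertices whose induced subgraph contains no triangle satisfies |T| ≤ 18. -/
/-!
Write the 27 vertices as `{1 + a, 4 + b, 7 + c}` with `a, b, c ∈ ZMod 3`. For fixed `s, t`, the
three vertices `{1 + i, 4 + (i + s), 7 + (i + t)}`, `i ∈ ZMod 3`, are pairwise disjoint, and the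
nine triangles obtained this way partition the 27 vertices. A triangle-free set contains at most
two vertices of each of them, hence at most `9 * 2 = 18` vertices.
-/

open Finset Function

lemma card_le_card_mul_of_subset_biUnion {ι α : Type*} [DecidableEq α] {T : Finset α}
    {s : Finset ι} {P : ι → Finset α} {k : ℕ} (hT : T ⊆ s.biUnion P)
    (hk : ∀ i ∈ s, #(T ∩ P i) ≤ k) : #T ≤ #s * k := by
  rw [← inter_eq_left.mpr hT, inter_biUnion]
  exact card_biUnion_le_card_mul s _ k hk

lemma card_inter_image_le_two_of_no_disjoint_triple {α : Type*} [DecidableEq α]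
    {T : Finset (Finset α)}
    (htri : ¬ ∃ x ∈ T, ∃ y ∈ T, ∃ z ∈ T, x ≠ y ∧ x ≠ z ∧ y ≠ z ∧
        Disjoint x y ∧ Disjoint x z ∧ Disjoint y z)
    {f : Fin 3 → Finset α} (hinj : Injective f) (hdisj : Pairwise (Disjoint on f)) :
    #(T ∩ univ.image f) ≤ 2 := by
  by_contra! h
  have hcard : #(univ.image f) = 3 := by rw [card_image_of_injective _ hinj]; rfl
  have hsub : univ.image f ⊆ T :=
    inter_eq_right.mp (eq_of_subset_of_card_le inter_subset_right (by omega))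
  have hmem (i : Fin 3) : f i ∈ T := hsub (mem_image_of_mem f (mem_univ i))
  exact htri ⟨f 0, hmem 0, f 1, hmem 1, f 2, hmem 2, hinj.ne (by decide), hinj.ne (by decide),
    hinj.ne (by decide), hdisj (by decide), hdisj (by decide), hdisj (by decide)⟩

def transversalTriangle (s t : Fin 3) (i : Fin 3) : Finset ℕ :=
  {1 + (i : ℕ), 4 + ((i + s : Fin 3) : ℕ), 7 + ((i + t : Fin 3) : ℕ)}

lemma transversalTriangle_injective (s t : Fin 3) : Injective (transversalTriangle s t) := by
  revert s t
  decide

lemma transversalTriangle_pairwise_disjoint (s t : Fin 3) :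
    Pairwise (Disjoint on transversalTriangle s t) := by
  intro i j
  revert s t i j
  decide

/-- Any triangle-free subset `T` of the 27 vertices `{a,b,c}` of `KG(9,3)` with
`a ∈ {1,2,3}`, `b ∈ {4,5,6}`, `c ∈ {7,8,9}` has at most 18 vertices. -/
theorem stmt_7 (T : Finset (Finset ℕ))
    (hT : T ⊆ (((Finset.Icc 1 9)).powersetCard 3).filter
        (fun w => (w ∩ ({1,2,3} : Finset ℕ)).card = 1 ∧
                  (w ∩ ({4,5,6} : Finset ℕ)).card = 1 ∧
                  (w ∩ ({7,8,9} : Finset ℕ)).card = 1))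
    (htri : ¬ ∃ x ∈ T, ∃ y ∈ T, ∃ z ∈ T, x ≠ y ∧ x ≠ z ∧ y ≠ z ∧
        Disjoint x y ∧ Disjoint x z ∧ Disjoint y z) :
    T.card ≤ 18 := by
  have hcover : T ⊆ (univ : Finset (Fin 3 × Fin 3)).biUnion
      fun p => univ.image (transversalTriangle p.1 p.2) :=
    hT.trans (by decide)
  calc #T ≤ #(univ : Finset (Fin 3 × Fin 3)) * 2 :=
        card_le_card_mul_of_subset_biUnion hcover fun p _ =>
          card_inter_image_le_two_of_no_disjoint_triple htri
            (transversalTriangle_injective p.1 p.2) (transversalTriangle_pairwise_disjoint p.1 p.2)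
    _ = 18 := by simp
end

section
/- Let n ≥ 7 and let u, v be two adjacent vertices of KG(n,3). Then the set S of all vertices adjacent to u or to v (excluding u and v themselves) has size 2·((n−3 choose 3) − 1) − (n−6 choose 3) when n ≥ 9, and size 2·((n−3 choose 3) − 1) when 7 ≤ n ≤ 8; moreover deleting S disconnects KG(n,3), leaving {u, v} as one component. -/
/-- The "disjointness" graph on all finite subsets of `ℕ`: two distinct finsets
are adjacent iff they are disjoint.  The Kneser graph `KG(n,k)` is its induced
subgraph on the `k`-subsets of `{1,…,n}`. -/
def KGbig : SimpleGraph (Finset ℕ) where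
  Adj x y := x ≠ y ∧ Disjoint x y
  symm := ⟨fun x y h => ⟨h.1.symm, h.2.symm⟩⟩
  loopless := ⟨fun x h => h.1 rfl⟩

/-- The vertex set of the Kneser graph `KG(n,k)`: the `k`-element subsets of
`{1,…,n}`. -/
def vset (n k : ℕ) : Set (Finset ℕ) := {s | s ⊆ Finset.Icc 1 n ∧ s.card = k}

/-!
For adjacent `u, v` of `KG(n,3)`, the neighbourhoods `N(u)`, `N(v)` are the 3-subsets of the
complements of `u` and `v`; each has `C(n-3,3)` elements, they contain `v` and `u` respectively,
and `N(u) ∩ N(v)` consists of the 3-subsets avoiding `u ∪ v`, so inclusion–exclusion gives the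
count (for `n ≤ 8` the term `C(n-6,3)` vanishes). Once `S` is removed, nothing but `u` and `v`
is adjacent to `u` or `v`, while a 3-subset of `u ∪ v` meeting both survives, so the graph
falls apart.
-/

open Finset

namespace SimpleGraph

variable {V : Type*} {G : SimpleGraph V}

lemma Reachable.mem_of_adj_closed {P : Set V} (hP : ∀ x y, G.Adj x y → x ∈ P → y ∈ P)
    {x y : V} (hxy : G.Reachable x y) (hx : x ∈ P) : y ∈ P := by
  rw [reachable_iff_reflTransGen] at hxy
  induction hxy with
  | refl => exact hx
  | tail _ hadj ih => exact hP _ _ hadj ih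

lemma not_connected_induce_of_isolated_pair {T : Set V} {u v w : V} (hu : u ∈ T) (hw : w ∈ T)
    (hwu : w ≠ u) (hwv : w ≠ v)
    (hsep : ∀ y ∈ T, y ≠ u → y ≠ v → ¬G.Adj u y ∧ ¬G.Adj v y) :
    ¬(G.induce T).Connected := by
  intro hconn
  have hclosed : ∀ x y : T, (G.induce T).Adj x y →
      x ∈ {z : T | (z : V) = u ∨ z = v} → y ∈ {z : T | (z : V) = u ∨ z = v} := by
    rintro x y hxy hx
    by_contra hy
    simp only [Set.mem_ofPred_eq, not_or] at hy
    obtain ⟨hnu, hnv⟩ := hsep y y.2 hy.1 hy.2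
    have hxy' : G.Adj x y := hxy
    rcases hx with hx | hx <;> rw [hx] at hxy'
    exacts [hnu hxy', hnv hxy']
  rcases (hconn ⟨u, hu⟩ ⟨w, hw⟩).mem_of_adj_closed hclosed (Or.inl rfl) with h | h
  · exact hwu h
  · exact hwv h

end SimpleGraph

namespace KGbig

lemma adj_iff_disjoint {u w : Finset ℕ} (hu : u.Nonempty) : KGbig.Adj u w ↔ Disjoint u w := by
  refine ⟨And.right, fun h => ⟨?_, h⟩⟩
  rintro rfl
  exact hu.ne_empty (disjoint_self.mp h)

end KGbig

/-- For `u ∈ vset n k` with `k ≥ 1`, this is the neighbourhood of `u` in `KG(n,k)`. -/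
def kneserNbhd (n k : ℕ) (u : Finset ℕ) : Finset (Finset ℕ) :=
  (Icc 1 n \ u).powersetCard k

section kneserNbhd

variable {n k : ℕ} {u v w : Finset ℕ}

lemma mem_kneserNbhd : w ∈ kneserNbhd n k u ↔ w ∈ vset n k ∧ Disjoint u w := by
  simp only [kneserNbhd, mem_powersetCard, subset_sdiff, vset, Set.mem_ofPred_eq, disjoint_comm]
  tauto

lemma card_kneserNbhd (hu : u ⊆ Icc 1 n) : #(kneserNbhd n k u) = (n - #u).choose k := by
  rw [kneserNbhd, card_powersetCard, card_sdiff_of_subset hu, Nat.card_Icc, Nat.add_sub_cancel]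

lemma kneserNbhd_inter_kneserNbhd :
    kneserNbhd n k u ∩ kneserNbhd n k v = kneserNbhd n k (u ∪ v) := by
  ext w
  simp only [mem_inter, mem_kneserNbhd, disjoint_union_left]
  tauto

lemma coe_kneserNbhd_union_sdiff (hu : u.Nonempty) (hv : v.Nonempty) :
    (((kneserNbhd n k u ∪ kneserNbhd n k v) \ {u, v} : Finset (Finset ℕ)) : Set (Finset ℕ)) =
      {w ∈ vset n k | (KGbig.Adj u w ∨ KGbig.Adj v w) ∧ w ≠ u ∧ w ≠ v} := by
  ext w
  simp only [coe_sdiff, coe_union, Set.mem_sdiff, Set.mem_union, mem_coe, mem_kneserNbhd,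
    KGbig.adj_iff_disjoint hu, KGbig.adj_iff_disjoint hv, coe_insert, coe_singleton,
    Set.mem_insert_iff, Set.mem_singleton_iff, Set.mem_ofPred_eq]
  tauto

lemma card_kneserNbhd_union_sdiff_add (hu : u ∈ vset n k) (hv : v ∈ vset n k)
    (huv : KGbig.Adj u v) :
    #((kneserNbhd n k u ∪ kneserNbhd n k v) \ {u, v}) + 2 + (n - 2 * k).choose k =
      2 * (n - k).choose k := by
  have hpair : {u, v} ⊆ kneserNbhd n k u ∪ kneserNbhd n k v := by
    refine insert_subset (mem_union_right _ ?_) (singleton_subset_iff.mpr (mem_union_left _ ?_))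
    · exact mem_kneserNbhd.mpr ⟨hu, huv.2.symm⟩
    · exact mem_kneserNbhd.mpr ⟨hv, huv.2⟩
  have hunion := card_union_add_card_inter (kneserNbhd n k u) (kneserNbhd n k v)
  rw [kneserNbhd_inter_kneserNbhd, card_kneserNbhd hu.1, card_kneserNbhd hv.1,
    card_kneserNbhd (union_subset hu.1 hv.1), card_union_of_disjoint huv.2, hu.2, hv.2] at hunion
  have hsdiff := card_sdiff_add_card_eq_card hpair
  rw [card_pair_eq_two_iff.mpr huv.1] at hsdiff
  rw [two_mul k]
  omega

end kneserNbhd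

lemma exists_mem_vset_not_disjoint {n k : ℕ} {u v : Finset ℕ} (hk : 2 ≤ k) (hu : u ∈ vset n k)
    (hv : v ∈ vset n k) (huv : Disjoint u v) :
    ∃ w ∈ vset n k, ¬Disjoint u w ∧ ¬Disjoint v w := by
  obtain ⟨a, ha⟩ := card_pos.mp (hu.2 ▸ (by omega : 0 < k))
  obtain ⟨b, hb⟩ := card_pos.mp (hv.2 ▸ (by omega : 0 < k))
  have hab : a ≠ b := fun h => disjoint_left.mp huv ha (h ▸ hb)
  obtain ⟨w, hsub, hw, hcard⟩ := exists_subsuperset_card_eq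
    (insert_subset (mem_union_left v ha) (singleton_subset_iff.mpr (mem_union_right u hb)))
    (card_pair_eq_two_iff.mpr hab ▸ hk)
    (by rw [card_union_of_disjoint huv, hu.2, hv.2]; omega)
  refine ⟨w, ⟨hw.trans (union_subset hu.1 hv.1), hcard⟩, ?_, ?_⟩
  · exact not_disjoint_iff.mpr ⟨a, ha, hsub (mem_insert_self a _)⟩
  · exact not_disjoint_iff.mpr ⟨b, hb, hsub (mem_insert_of_mem (mem_singleton_self b))⟩

theorem stmt_11_general (n : ℕ) (u v : Finset ℕ)
    (hu : u ∈ vset n 3) (hv : v ∈ vset n 3) (huv : KGbig.Adj u v)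
    (S : Set (Finset ℕ))
    (hS : S = {w ∈ vset n 3 | (KGbig.Adj u w ∨ KGbig.Adj v w) ∧ w ≠ u ∧ w ≠ v}) :
    (9 ≤ n → S.ncard = 2 * ((n - 3).choose 3 - 1) - (n - 6).choose 3) ∧
    (n ≤ 8 → S.ncard = 2 * ((n - 3).choose 3 - 1)) ∧
    ¬ (KGbig.induce (vset n 3 \ S)).Connected ∧
    ∀ w ∈ vset n 3 \ S, w ≠ u → w ≠ v → ¬ KGbig.Adj u w ∧ ¬ KGbig.Adj v w := by
  have hu0 : u.Nonempty := card_pos.mp (by rw [hu.2]; norm_num)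
  have hv0 : v.Nonempty := card_pos.mp (by rw [hv.2]; norm_num)
  have hcard : S.ncard + 2 + (n - 6).choose 3 = 2 * (n - 3).choose 3 := by
    rw [hS, ← coe_kneserNbhd_union_sdiff hu0 hv0, Set.ncard_coe_finset]
    exact card_kneserNbhd_union_sdiff_add hu hv huv
  have hsep : ∀ w ∈ vset n 3 \ S, w ≠ u → w ≠ v → ¬ KGbig.Adj u w ∧ ¬ KGbig.Adj v w := by
    rintro w ⟨hw, hwS⟩ hwu hwv
    rw [hS] at hwS
    exact ⟨fun h => hwS ⟨hw, Or.inl h, hwu, hwv⟩, fun h => hwS ⟨hw, Or.inr h, hwu, hwv⟩⟩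
  refine ⟨fun _ => by omega, fun h8 => ?_, ?_, hsep⟩
  · have : (n - 6).choose 3 = 0 := Nat.choose_eq_zero_of_lt (by omega)
    omega
  obtain ⟨w, hw, hwu, hwv⟩ := exists_mem_vset_not_disjoint (by norm_num) hu hv huv.2
  have hwS : w ∉ S := by
    rw [hS]
    rintro ⟨-, hadj | hadj, -⟩
    exacts [hwu hadj.2, hwv hadj.2]
  have huS : u ∉ S := by
    rw [hS]
    exact fun h => h.2.2.1 rfl
  refine KGbig.not_connected_induce_of_isolated_pair ⟨hu, huS⟩ ⟨hw, hwS⟩ ?_ ?_ hsep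
  · exact fun h => hwv (h ▸ huv.2.symm)
  · exact fun h => hwu (h ▸ huv.2)

/-- For adjacent vertices `u, v` of `KG(n,3)` (`n ≥ 7`), the set `S` of all
vertices adjacent to `u` or to `v` (excluding `u, v` themselves) has size
`2(C(n−3,3) − 1) − C(n−6,3)` when `n ≥ 9` and `2(C(n−3,3) − 1)` when
`7 ≤ n ≤ 8`; deleting `S` disconnects `KG(n,3)` and leaves `{u, v}` as one
component (no vertex outside `S` other than `u, v` is adjacent to `u` or `v`). -/
theorem stmt_11 (n : ℕ) (hn : 7 ≤ n) (u v : Finset ℕ)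
    (hu : u ∈ vset n 3) (hv : v ∈ vset n 3) (huv : KGbig.Adj u v)
    (S : Set (Finset ℕ))
    (hS : S = {w ∈ vset n 3 | (KGbig.Adj u w ∨ KGbig.Adj v w) ∧ w ≠ u ∧ w ≠ v}) :
    (9 ≤ n → S.ncard = 2 * ((n - 3).choose 3 - 1) - (n - 6).choose 3) ∧
    (n ≤ 8 → S.ncard = 2 * ((n - 3).choose 3 - 1)) ∧
    ¬ (KGbig.induce (vset n 3 \ S)).Connected ∧
    ∀ w ∈ vset n 3 \ S, w ≠ u → w ≠ v → ¬ KGbig.Adj u w ∧ ¬ KGbig.Adj v w :=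
  stmt_11_general n u v hu hv huv S hS
end

section
/- Let n ≥ 9 and suppose v₁ = {1,2,3}, v₂ = {4,5,6}, v₃ = {7,8,9} form a triangle in one component C₁ and w₁ = {1,4,7}, w₂ = {2,5,8}, w₃ = {3,6,9} form a triangle in a different component C₂ of KG(n,3) − S for some vertex set S. Then |C₁ ∪ C₂| ≤ 45. -/
open Finset

def transversals (A B C : Finset ℕ) : Finset (Finset ℕ) :=
  (A ×ˢ B ×ˢ C).image fun t => {t.1, t.2.1, t.2.2}

lemma mem_transversals_of_not_disjoint {A B C y : Finset ℕ} (hy : #y = 3)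
    (hA : ¬Disjoint y A) (hB : ¬Disjoint y B) (hC : ¬Disjoint y C)
    (hAB : Disjoint A B) (hAC : Disjoint A C) (hBC : Disjoint B C) :
    y ∈ transversals A B C := by
  obtain ⟨a, hay, haA⟩ := not_disjoint_iff.1 hA
  obtain ⟨b, hby, hbB⟩ := not_disjoint_iff.1 hB
  obtain ⟨c, hcy, hcC⟩ := not_disjoint_iff.1 hC
  have hab : a ≠ b := fun h => disjoint_left.1 hAB haA (h ▸ hbB)
  have hac : a ≠ c := fun h => disjoint_left.1 hAC haA (h ▸ hcC)
  have hbc : b ≠ c := fun h => disjoint_left.1 hBC hbB (h ▸ hcC)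
  have habc : {a, b, c} = y :=
    eq_of_subset_of_card_le (by simp [insert_subset_iff, hay, hby, hcy])
      (by rw [hy, card_eq_three.2 ⟨a, b, c, hab, hac, hbc, rfl⟩])
  exact mem_image.2 ⟨(a, b, c), by simp [haA, hbB, hcC], habc⟩

def rowTransversals : Finset (Finset ℕ) := transversals {1, 2, 3} {4, 5, 6} {7, 8, 9}

def colTransversals : Finset (Finset ℕ) := transversals {1, 4, 7} {2, 5, 8} {3, 6, 9}

set_option maxRecDepth 100000 in
lemma card_rowTransversals_union_colTransversals :
    #(rowTransversals ∪ colTransversals) = 48 := by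
  decide

lemma three_le_card_rowTransversals_inter_colTransversals :
    3 ≤ #(rowTransversals ∩ colTransversals) := by
  decide

lemma three_le_card_disjoint_transversals :
    ∀ ℓ ∈ rowTransversals ∩ colTransversals,
      3 ≤ #((rowTransversals \ colTransversals).filter (Disjoint ℓ)) ∧
      3 ≤ #((colTransversals \ rowTransversals).filter (Disjoint ℓ)) := by
  decide

set_option maxRecDepth 100000 in
lemma mem_vset_of_mem_transversals {n : ℕ} (hn : 9 ≤ n) :
    ∀ r ∈ rowTransversals ∪ colTransversals, r ∈ vset n 3 := by
  have h : ∀ r ∈ rowTransversals ∪ colTransversals, r ⊆ Icc 1 9 ∧ #r = 3 := by decide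
  exact fun r hr => ⟨(h r hr).1.trans (Icc_subset_Icc_right hn), (h r hr).2⟩

lemma not_disjoint_of_not_adj {C₁ C₂ : Set (Finset ℕ)} (hC₁C₂ : Disjoint C₁ C₂)
    (hsep : ∀ x ∈ C₁, ∀ y ∈ C₂, ¬KGbig.Adj x y) : ∀ x ∈ C₁, ∀ y ∈ C₂, ¬Disjoint x y :=
  fun x hx y hy hxy => hsep x hx y hy ⟨fun h => Set.disjoint_left.1 hC₁C₂ hx (h ▸ hy), hxy⟩

lemma coe_filter_disjoint_subset {n : ℕ} {S C C' : Set (Finset ℕ)} {T U : Finset (Finset ℕ)}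
    (hU : ∀ r ∈ U, r ∈ vset n 3) (hcover : ∀ r ∈ vset n 3, r ∈ S ∨ r ∈ C ∨ r ∈ C')
    (hCT : ∀ x ∈ C, x ∈ T) (hmeet : ∀ x ∈ C, ∀ y ∈ C', ¬Disjoint x y)
    {ℓ : Finset ℕ} (hℓ : ℓ ∈ C) :
    (↑((U \ T).filter (Disjoint ℓ)) : Set (Finset ℕ)) ⊆ S := by
  intro r hr
  simp only [coe_filter, mem_sdiff] at hr
  obtain ⟨⟨hrU, hrT⟩, hℓr⟩ := hr
  rcases hcover r (hU r hrU) with hS | hC | hC'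
  · exact hS
  · exact absurd (hCT r hC) hrT
  · exact absurd hℓr (hmeet ℓ hℓ r hC')

lemma exists_three_le_card_transversals_subset {n : ℕ} (hn : 9 ≤ n) {S C₁ C₂ : Set (Finset ℕ)}
    (hcover : ∀ r ∈ vset n 3, r ∈ S ∨ r ∈ C₁ ∨ r ∈ C₂)
    (hC₁ : ∀ x ∈ C₁, x ∈ colTransversals) (hC₂ : ∀ y ∈ C₂, y ∈ rowTransversals)
    (hmeet : ∀ x ∈ C₁, ∀ y ∈ C₂, ¬Disjoint x y) :
    ∃ R ⊆ rowTransversals ∪ colTransversals, (↑R : Set (Finset ℕ)) ⊆ S ∧ 3 ≤ #R := by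
  have hvset := mem_vset_of_mem_transversals hn
  by_cases hL : ↑(rowTransversals ∩ colTransversals) ⊆ S
  · exact ⟨_, inter_subset_union, hL, three_le_card_rowTransversals_inter_colTransversals⟩
  obtain ⟨ℓ, hℓ, hℓS⟩ := Set.not_subset.1 hL
  rcases (hcover ℓ (hvset ℓ (inter_subset_union hℓ))).resolve_left hℓS with hℓC | hℓC
  · exact ⟨_, (filter_subset _ _).trans (sdiff_subset.trans subset_union_left),
      coe_filter_disjoint_subset (fun r hr => hvset r (mem_union_left _ hr)) hcover
        hC₁ hmeet hℓC, (three_le_card_disjoint_transversals ℓ hℓ).1⟩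
  · exact ⟨_, (filter_subset _ _).trans (sdiff_subset.trans subset_union_right),
      coe_filter_disjoint_subset (fun r hr => hvset r (mem_union_right _ hr))
        (fun r hr => (hcover r hr).imp_right Or.symm) hC₂
        (fun y hy x hx h => hmeet x hx y hy h.symm) hℓC,
      (three_le_card_disjoint_transversals ℓ hℓ).2⟩

lemma ncard_le_card_sdiff {α : Type*} [DecidableEq α] {X S : Set α} {T R : Finset α}
    (hXT : X ⊆ ↑T) (hSX : Disjoint S X) (hRS : ↑R ⊆ S) : X.ncard ≤ #(T \ R) := by
  have hX : X ⊆ ↑(T \ R) := fun x hx =>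
    mem_sdiff.2 ⟨hXT hx, fun hxR => Set.disjoint_left.1 hSX (hRS hxR) hx⟩
  simpa only [Set.ncard_coe_finset] using Set.ncard_le_ncard hX (finite_toSet _)

theorem stmt_15_general (n : ℕ) (hn : 9 ≤ n) (S C₁ C₂ : Set (Finset ℕ))
    (hC₁v : C₁ ⊆ vset n 3) (hC₂v : C₂ ⊆ vset n 3)
    (hcover : vset n 3 ⊆ S ∪ C₁ ∪ C₂)
    (hSC₁ : Disjoint S C₁) (hSC₂ : Disjoint S C₂) (hC₁C₂ : Disjoint C₁ C₂)
    (hsep : ∀ x ∈ C₁, ∀ y ∈ C₂, ¬ KGbig.Adj x y)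
    (h1 : ({1,2,3} : Finset ℕ) ∈ C₁) (h2 : ({4,5,6} : Finset ℕ) ∈ C₁)
    (h3 : ({7,8,9} : Finset ℕ) ∈ C₁)
    (h4 : ({1,4,7} : Finset ℕ) ∈ C₂) (h5 : ({2,5,8} : Finset ℕ) ∈ C₂)
    (h6 : ({3,6,9} : Finset ℕ) ∈ C₂) :
    (C₁ ∪ C₂).ncard ≤ 45 := by
  have hmeet := not_disjoint_of_not_adj hC₁C₂ hsep
  have hC₁col : ∀ x ∈ C₁, x ∈ colTransversals := fun x hx =>
    mem_transversals_of_not_disjoint (hC₁v hx).2 (hmeet x hx _ h4) (hmeet x hx _ h5)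
      (hmeet x hx _ h6) (by decide) (by decide) (by decide)
  have hC₂row : ∀ y ∈ C₂, y ∈ rowTransversals := fun y hy =>
    mem_transversals_of_not_disjoint (hC₂v hy).2 (fun h => hmeet _ h1 y hy h.symm)
      (fun h => hmeet _ h2 y hy h.symm) (fun h => hmeet _ h3 y hy h.symm)
      (by decide) (by decide) (by decide)
  have hcover' : ∀ r ∈ vset n 3, r ∈ S ∨ r ∈ C₁ ∨ r ∈ C₂ := fun r hr => by
    simpa only [Set.mem_union, or_assoc] using hcover hr
  obtain ⟨R, hRT, hRS, hR⟩ :=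
    exists_three_le_card_transversals_subset hn hcover' hC₁col hC₂row hmeet
  calc (C₁ ∪ C₂).ncard ≤ #((rowTransversals ∪ colTransversals) \ R) :=
        ncard_le_card_sdiff
          (Set.union_subset (fun x hx => mem_union_right _ (hC₁col x hx))
            (fun y hy => mem_union_left _ (hC₂row y hy)))
          (Set.disjoint_union_right.2 ⟨hSC₁, hSC₂⟩) hRS
    _ = 48 - #R := by rw [card_sdiff_of_subset hRT, card_rowTransversals_union_colTransversals]
    _ ≤ 45 := by omega

/-- Let `n ≥ 9` and suppose the vertices of `KG(n,3)` are partitioned into `S`,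
`C₁`, `C₂` with no edges between `C₁` and `C₂`, where `C₁` contains the triangle
`{1,2,3}, {4,5,6}, {7,8,9}` and `C₂` contains the triangle
`{1,4,7}, {2,5,8}, {3,6,9}`.  Then `|C₁ ∪ C₂| ≤ 45`. -/
theorem stmt_15 (n : ℕ) (hn : 9 ≤ n) (S C₁ C₂ : Set (Finset ℕ))
    (hSv : S ⊆ vset n 3) (hC₁v : C₁ ⊆ vset n 3) (hC₂v : C₂ ⊆ vset n 3)
    (hcover : vset n 3 ⊆ S ∪ C₁ ∪ C₂)
    (hSC₁ : Disjoint S C₁) (hSC₂ : Disjoint S C₂) (hC₁C₂ : Disjoint C₁ C₂)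
    (hsep : ∀ x ∈ C₁, ∀ y ∈ C₂, ¬ KGbig.Adj x y)
    (h1 : ({1,2,3} : Finset ℕ) ∈ C₁) (h2 : ({4,5,6} : Finset ℕ) ∈ C₁)
    (h3 : ({7,8,9} : Finset ℕ) ∈ C₁)
    (h4 : ({1,4,7} : Finset ℕ) ∈ C₂) (h5 : ({2,5,8} : Finset ℕ) ∈ C₂)
    (h6 : ({3,6,9} : Finset ℕ) ∈ C₂) :
    (C₁ ∪ C₂).ncard ≤ 45 :=
  stmt_15_general n hn S C₁ C₂ hC₁v hC₂v hcover hSC₁ hSC₂ hC₁C₂ hsep h1 h2 h3 h4 h5 h6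
end

section
/- In KG(n,3) with n ≥ 8 and v₁ = {1,2,3}, v₂ = {4,5,6}, v₃ = {1,7,8}, the 12 common non-neighbors of v₁, v₂, v₃ not containing label 1 induce a subgraph that is a disjoint union of two 6-cycles. -/
/-!
A 3-set avoiding 1 that meets `{1,2,3}`, `{4,5,6}` and `{1,7,8}` is `{a,b,c}` with `a ∈ {2,3}`,
`b ∈ {4,5,6}`, `c ∈ {7,8}`, and two such sets are disjoint iff they differ in every coordinate.
An edge therefore flips both `a` and `c`, so it preserves whether `(a,c)` lies in
`{(2,7),(3,8)}` or in `{(2,8),(3,7)}`. On each class `c` is determined by `a`, and the induced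
graph is the tensor product `K₂ × K₃` on `(a,b)`, which is a 6-cycle.
-/

instance KGbig.decidableAdj : DecidableRel KGbig.Adj := fun x y =>
  inferInstanceAs (Decidable (x ≠ y ∧ Disjoint x y))

namespace SimpleGraph

variable {V : Type*} (G : SimpleGraph V)

lemma induce_connected_of_isChain {l : List V} (hne : l ≠ []) (hl : l.IsChain G.Adj) :
    (G.induce {v | v ∈ l}).Connected := by
  have h := (Walk.ofSupport l hne hl).connected_induce_support
  rwa [Walk.support_ofSupport] at h

end SimpleGraph

lemma Set.ncard_sep_finset {α : Type*} (s : Finset α) (p : α → Prop) [DecidablePred p] :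
    {x ∈ (s : Set α) | p x}.ncard = (s.filter p).card := by
  rw [← Set.ncard_coe_finset, Finset.coe_filter]
  rfl

/- The classes `2 ∈ s ↔ 7 ∈ s` and `2 ∈ s ↔ 8 ∈ s`, each listed in cyclic order. -/
def hexagonOne : List (Finset ℕ) := [{2,4,7}, {3,5,8}, {2,6,7}, {3,4,8}, {2,5,7}, {3,6,8}]

def hexagonTwo : List (Finset ℕ) := [{2,4,8}, {3,5,7}, {2,6,8}, {3,4,7}, {2,5,8}, {3,6,7}]

lemma mem_hexagon_of_meets {s : Finset ℕ} (hs : s.card = 3)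
    (h₁ : (s ∩ {1, 2, 3}).Nonempty) (h₂ : (s ∩ {4, 5, 6}).Nonempty)
    (h₃ : (s ∩ {1, 7, 8}).Nonempty) (h1 : 1 ∉ s) :
    s ∈ hexagonOne.toFinset ∪ hexagonTwo.toFinset := by
  obtain ⟨a, ha⟩ := h₁
  obtain ⟨b, hb⟩ := h₂
  obtain ⟨c, hc⟩ := h₃
  simp only [Finset.mem_inter, Finset.mem_insert, Finset.mem_singleton] at ha hb hc
  have hsub : {a, b, c} ⊆ s := by simp [Finset.insert_subset_iff, ha.1, hb.1, hc.1]
  obtain ⟨has, rfl | rfl | rfl⟩ := ha <;> try contradiction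
  all_goals
    obtain ⟨hcs, rfl | rfl | rfl⟩ := hc <;> try contradiction
  all_goals
    obtain ⟨-, rfl | rfl | rfl⟩ := hb
  all_goals
    rw [← Finset.eq_of_subset_of_card_le hsub (by rw [hs]; rfl)]
    decide

lemma meets_of_mem_hexagon :
    ∀ s ∈ hexagonOne.toFinset ∪ hexagonTwo.toFinset, s ⊆ Finset.Icc 1 8 ∧ s.card = 3 ∧
      (s ∩ {1, 2, 3}).Nonempty ∧ (s ∩ {4, 5, 6}).Nonempty ∧ (s ∩ {1, 7, 8}).Nonempty ∧ 1 ∉ s := by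
  decide

lemma commonNonNeighbours_eq {n : ℕ} (hn : 8 ≤ n) :
    {s ∈ vset n 3 | (s ∩ ({1,2,3} : Finset ℕ)).Nonempty ∧
        (s ∩ ({4,5,6} : Finset ℕ)).Nonempty ∧
        (s ∩ ({1,7,8} : Finset ℕ)).Nonempty ∧ 1 ∉ s} =
      ↑(hexagonOne.toFinset ∪ hexagonTwo.toFinset) := by
  ext s
  constructor
  · rintro ⟨⟨-, hs⟩, h₁, h₂, h₃, h1⟩
    exact mem_hexagon_of_meets hs h₁ h₂ h₃ h1
  · intro hs
    obtain ⟨hsub, hcard, hmeets⟩ := meets_of_mem_hexagon s hs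
    exact ⟨⟨hsub.trans (Finset.Icc_subset_Icc_right hn), hcard⟩, hmeets⟩

lemma not_adj_of_mem_hexagonOne_of_mem_hexagonTwo :
    ∀ x ∈ hexagonOne.toFinset, ∀ y ∈ hexagonTwo.toFinset, ¬ KGbig.Adj x y := by
  decide

lemma connected_induce_hexagonOne : (KGbig.induce ↑hexagonOne.toFinset).Connected := by
  rw [List.coe_toFinset]
  exact KGbig.induce_connected_of_isChain (List.cons_ne_nil _ _) (by decide)

lemma connected_induce_hexagonTwo : (KGbig.induce ↑hexagonTwo.toFinset).Connected := by
  rw [List.coe_toFinset]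
  exact KGbig.induce_connected_of_isChain (List.cons_ne_nil _ _) (by decide)

lemma card_adj_hexagonOne :
    ∀ x ∈ hexagonOne.toFinset, (hexagonOne.toFinset.filter (KGbig.Adj x)).card = 2 := by
  decide

lemma card_adj_hexagonTwo :
    ∀ x ∈ hexagonTwo.toFinset, (hexagonTwo.toFinset.filter (KGbig.Adj x)).card = 2 := by
  decide

/-- In `KG(n,3)` with `n ≥ 8` and `v₁ = {1,2,3}`, `v₂ = {4,5,6}`,
`v₃ = {1,7,8}`, the 12 common non-neighbours of `v₁, v₂, v₃` not containing the
label 1 induce a subgraph which is the disjoint union of two 6-cycles: they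
split into two disjoint sets of 6 vertices with no edges between them, each
inducing a connected 2-regular (hence cycle) graph. -/
theorem stmt_18 (n : ℕ) (hn : 8 ≤ n) (A : Set (Finset ℕ))
    (hA : A = {s ∈ vset n 3 | (s ∩ ({1,2,3} : Finset ℕ)).Nonempty ∧
        (s ∩ ({4,5,6} : Finset ℕ)).Nonempty ∧
        (s ∩ ({1,7,8} : Finset ℕ)).Nonempty ∧ 1 ∉ s}) :
    A.ncard = 12 ∧
    ∃ A₁ A₂ : Set (Finset ℕ),
      A₁ ∪ A₂ = A ∧ Disjoint A₁ A₂ ∧ A₁.ncard = 6 ∧ A₂.ncard = 6 ∧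
      (∀ x ∈ A₁, ∀ y ∈ A₂, ¬ KGbig.Adj x y) ∧
      (KGbig.induce A₁).Connected ∧ (KGbig.induce A₂).Connected ∧
      (∀ x ∈ A₁, {y ∈ A₁ | KGbig.Adj x y}.ncard = 2) ∧
      (∀ x ∈ A₂, {y ∈ A₂ | KGbig.Adj x y}.ncard = 2) := by
  rw [hA, commonNonNeighbours_eq hn, Set.ncard_coe_finset]
  refine ⟨by decide, ↑hexagonOne.toFinset, ↑hexagonTwo.toFinset, (Finset.coe_union _ _).symm,
    Finset.disjoint_coe.2 (by decide), ?_, ?_, not_adj_of_mem_hexagonOne_of_mem_hexagonTwo,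
    connected_induce_hexagonOne, connected_induce_hexagonTwo, fun x hx => ?_, fun x hx => ?_⟩
  · rw [Set.ncard_coe_finset]; decide
  · rw [Set.ncard_coe_finset]; decide
  · rw [Set.ncard_sep_finset]
    exact card_adj_hexagonOne x hx
  · rw [Set.ncard_sep_finset]
    exact card_adj_hexagonTwo x hx
end
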